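/- Let G be a finite edge-coloured graph with minimum degree δ(G) > 0 and let k be a positive integer. Then h_{2k}(1, 2k) = max over 1 ≤ i < j ≤ 2k of h_{2k}(i, j). -/

import Mathlib

open SimpleGraph Finset
open scoped Classical

/-- The cyclic successor of an index `i : Fin m` (i.e. `i + 1` mod `m`). -/
def cyclicSucc {m : ℕ} (i : Fin m) : Fin m := ⟨(i.val + 1) % m, Nat.mod_lt _ i.pos⟩

/-- `u : Fin m → V` is a homomorphic cycle of length `m` in `G`: consecutive vertices
(cyclically, indices mod `m`) are adjacent. -/
def IsHomCycle {V : Type} (G : SimpleGraph V) {m : ℕ} (u : Fin m → V) : Prop :=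
  ∀ i : Fin m, G.Adj (u i) (u (cyclicSucc i))

/-- `h_m`: the sum of the weights `1/∏ᵢ d(uᵢ)` of all homomorphic cycles of length `m`
in `G`. -/
noncomputable def homCycleSum {V : Type} [Fintype V] (G : SimpleGraph V)
    [DecidableRel G.Adj] (m : ℕ) : ℝ :=
  ∑ u : Fin m → V, if IsHomCycle G u then ∏ i, ((G.degree (u i) : ℝ))⁻¹ else 0

/-- `h_m(a+1, b+1)` (edges indexed so that the `a`-th edge of the cycle is
`u_a u_{a+1}`): the sum of the weights of the homomorphic `m`-cycles whose edges
`u_a u_{a+1}` and `u_b u_{b+1}` receive the same colour under `c`. -/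
noncomputable def homCyclePairSum {V : Type} [Fintype V] (G : SimpleGraph V)
    [DecidableRel G.Adj] {β : Type} (c : Sym2 V → β) {m : ℕ} (a b : Fin m) : ℝ :=
  ∑ u : Fin m → V,
    if IsHomCycle G u ∧ c s(u a, u (cyclicSucc a)) = c s(u b, u (cyclicSucc b)) then
      ∏ i, ((G.degree (u i) : ℝ))⁻¹
    else 0

/-!
Let `N = D^{-1/2} A D^{-1/2}` be the normalised adjacency matrix of `G` and `N_α` its restriction
to the edges of colour `α`. The weight of a homomorphic cycle is the product of the entries of `N`
along it, so pair sums are traces: `h_{2k}(i, j) = F(p, q) := ∑_α tr(N_α N^p N_α N^q)`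
(`Matrix.traceSandwich`) with `p + q = 2k - 2`, and `h_{2k}(1, 2k) = F(0, 2k - 2)`.
As `N` and `N_α` are symmetric, `F(p + r, q + t)` is the Frobenius inner product
`∑_α ⟨N^p N_α N^q, N^r N_α N^t⟩`, so Cauchy–Schwarz gives
`F(p + r, q + t)² ≤ F(2p, 2q) F(2r, 2t)`. At a maximiser `a ≤ n` of `a ↦ F(a, 2n - a)`
(one exists by the symmetry `F(p, q) = F(q, p)`), this bound with `(p, q, r, t) = (a, n - a, 0, n)`
squeezes the maximum below `F(0, 2n)`.
-/

theorem cyclicSucc_eq_add_one {m : ℕ} [NeZero m] (i : Fin m) : cyclicSucc i = i + 1 := by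
  ext
  simp [cyclicSucc, Fin.val_add]

theorem Fin.cons_add_one {α : Type*} {t : ℕ} (x : α) (v : Fin t → α) (i : Fin (t + 1)) :
    Fin.cons (α := fun _ ↦ α) x v (i + 1) = Fin.snoc (α := fun _ ↦ α) v x i := by
  cases i using Fin.lastCases with
  | last => simp
  | cast j => simp [Fin.coeSucc_eq_succ]

theorem List.ofFn_ite_or_eq {α : Type*} {m : ℕ} (a b : Fin m) (hab : a < b) (x y : α) :
    List.ofFn (fun i ↦ if i = a ∨ i = b then x else y) =
      replicate a y ++ x :: replicate (b - a - 1) y ++ x :: replicate (m - 1 - b) y := by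
  refine List.ext_getElem (by simp; omega) fun i _ _ ↦ ?_
  simp only [List.getElem_ofFn, Fin.ext_iff, List.getElem_append, List.getElem_cons,
    List.getElem_replicate, List.length_replicate, List.length_append, List.length_cons]
  split_ifs <;> first | rfl | omega

theorem List.prod_ofFn_ite_or_eq {M : Type*} [Monoid M] {m : ℕ} (a b : Fin m) (hab : a < b)
    (x y : M) :
    (List.ofFn (fun i ↦ if i = a ∨ i = b then x else y)).prod =
      y ^ (a : ℕ) * x * y ^ (b - a - 1 : ℕ) * x * y ^ (m - 1 - b) := by
  simp [List.ofFn_ite_or_eq a b hab, mul_assoc]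

theorem le_apply_zero_of_sq_le_apply_two_mul_mul {R : Type*} [CommRing R] [LinearOrder R]
    [IsStrictOrderedRing R] {n : ℕ} (g : ℕ → R) (hsymm : ∀ a ≤ 2 * n, g (2 * n - a) = g a)
    (hsq : ∀ a ≤ n, g a ^ 2 ≤ g (2 * a) * g 0) (h0 : 0 ≤ g 0) {a : ℕ} (ha : a ≤ 2 * n) :
    g a ≤ g 0 := by
  obtain ⟨a₀, ha₀, hmax⟩ := (range (2 * n + 1)).exists_max_image g nonempty_range_add_one
  simp only [mem_range, Nat.lt_succ_iff] at ha₀ hmax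
  obtain ⟨a₁, ha₁, hmax₁⟩ : ∃ a₁ ≤ n, ∀ b ≤ 2 * n, g b ≤ g a₁ := by
    rcases le_total a₀ n with h | h
    · exact ⟨a₀, h, hmax⟩
    · exact ⟨2 * n - a₀, by omega, by rwa [hsymm a₀ ha₀]⟩
  have hg0 := hmax₁ 0 (Nat.zero_le _)
  have hg2 := hmax₁ (2 * a₁) (by omega)
  -- `g a₁ ^ 2 ≤ g (2 a₁) * g 0 ≤ g a₁ * g 0` with `0 ≤ g 0 ≤ g a₁`
  have : g a₁ ≤ g 0 := by nlinarith [hsq a₁ ha₁, mul_le_mul_of_nonneg_right hg2 h0]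
  exact (hmax₁ a ha).trans this

namespace Matrix

variable {ι m n R : Type*} [Fintype m] [Fintype n]

section ListProd

variable [DecidableEq n] [CommSemiring R]

theorem list_ofFn_prod_apply {t : ℕ} (K : Fin (t + 1) → Matrix n n R) (x y : n) :
    (List.ofFn K).prod x y = ∑ v : Fin t → n,
      ∏ i, K i (Fin.cons (α := fun _ ↦ n) x v i) (Fin.snoc (α := fun _ ↦ n) v y i) := by
  induction t generalizing x with
  | zero => simp [Fin.snoc]
  | succ t ih =>
    rw [List.ofFn_succ, List.prod_cons, mul_apply, ← (Fin.consEquiv fun _ ↦ n).sum_comp,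
      Fintype.sum_prod_type]
    refine sum_congr rfl fun z _ ↦ ?_
    rw [ih, mul_sum]
    refine sum_congr rfl fun w _ ↦ ?_
    change _ = ∏ i, K i (Fin.cons (α := fun _ ↦ n) x (Fin.cons (α := fun _ ↦ n) z w) i)
      (Fin.snoc (α := fun _ ↦ n) (Fin.cons (α := fun _ ↦ n) z w) y i)
    rw [← Fin.cons_snoc_eq_snoc_cons, Fin.prod_univ_succ (n := t + 1)]
    simp only [Fin.cons_zero, Fin.cons_succ]

theorem trace_list_ofFn_prod {m : ℕ} [NeZero m] (K : Fin m → Matrix n n R) :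
    (List.ofFn K).prod.trace = ∑ u : Fin m → n, ∏ i, K i (u i) (u (i + 1)) := by
  obtain ⟨t, rfl⟩ := Nat.exists_eq_succ_of_ne_zero (NeZero.ne m)
  rw [← (Fin.consEquiv fun _ ↦ n).sum_comp, Fintype.sum_prod_type]
  refine sum_congr rfl fun x _ ↦ ?_
  simp only [diag_apply, list_ofFn_prod_apply, Fin.consEquiv_apply, Fin.cons_add_one]

end ListProd

section Frobenius

variable [CommRing R] [LinearOrder R] [IsStrictOrderedRing R]

theorem sum_trace_transpose_mul_sq_le (s : Finset ι) (X Y : ι → Matrix m n R) :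
    (∑ i ∈ s, ((X i)ᵀ * Y i).trace) ^ 2 ≤
      (∑ i ∈ s, ((X i)ᵀ * X i).trace) * ∑ i ∈ s, ((Y i)ᵀ * Y i).trace := by
  simp only [← vec_dotProduct_vec, dotProduct, ← sum_product', ← sq]
  exact sum_mul_sq_le_sq_mul_sq _ _ _

theorem trace_transpose_mul_self_nonneg (X : Matrix m n R) : 0 ≤ (Xᵀ * X).trace := by
  rw [← vec_dotProduct_vec]
  exact sum_nonneg fun _ _ ↦ mul_self_nonneg _

end Frobenius

variable [DecidableEq n] [CommRing R]

def traceSandwich (N : Matrix n n R) (A : ι → Matrix n n R) (s : Finset ι) (p q : ℕ) : R :=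
  ∑ i ∈ s, (A i * N ^ p * A i * N ^ q).trace

variable (N : Matrix n n R) (A : ι → Matrix n n R) (s : Finset ι)

theorem traceSandwich_comm (p q : ℕ) : traceSandwich N A s p q = traceSandwich N A s q p := by
  refine sum_congr rfl fun i _ ↦ ?_
  rw [Matrix.mul_assoc _ (A i), trace_mul_comm, ← Matrix.mul_assoc]

variable {N A s}

theorem sum_trace_transpose_mul_eq_traceSandwich (hN : N.IsSymm) (hA : ∀ i ∈ s, (A i).IsSymm)
    (p q r t : ℕ) :
    ∑ i ∈ s, ((N ^ p * A i * N ^ q)ᵀ * (N ^ r * A i * N ^ t)).trace =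
      traceSandwich N A s (p + r) (t + q) := by
  refine sum_congr rfl fun i hi ↦ ?_
  rw [transpose_mul, transpose_mul, transpose_pow, transpose_pow, hN.eq, (hA i hi).eq,
    show N ^ q * (A i * N ^ p) * (N ^ r * A i * N ^ t) =
        N ^ q * (A i * N ^ (p + r) * A i * N ^ t) by simp only [pow_add, Matrix.mul_assoc],
    trace_mul_comm, pow_add N t q]
  simp only [Matrix.mul_assoc]

variable [LinearOrder R] [IsStrictOrderedRing R]

theorem traceSandwich_sq_le (hN : N.IsSymm) (hA : ∀ i ∈ s, (A i).IsSymm) (p q r t : ℕ) :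
    traceSandwich N A s (p + r) (q + t) ^ 2 ≤
      traceSandwich N A s (2 * p) (2 * q) * traceSandwich N A s (2 * r) (2 * t) := by
  have := sum_trace_transpose_mul_sq_le s (fun i ↦ N ^ p * A i * N ^ q)
    (fun i ↦ N ^ r * A i * N ^ t)
  simp only [sum_trace_transpose_mul_eq_traceSandwich hN hA] at this
  rwa [add_comm t q, ← two_mul, ← two_mul, ← two_mul, ← two_mul] at this

theorem traceSandwich_two_mul_nonneg (hN : N.IsSymm) (hA : ∀ i ∈ s, (A i).IsSymm) (p q : ℕ) :
    0 ≤ traceSandwich N A s (2 * p) (2 * q) := by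
  rw [two_mul, two_mul, ← sum_trace_transpose_mul_eq_traceSandwich hN hA p q p q]
  exact sum_nonneg fun _ _ ↦ trace_transpose_mul_self_nonneg _

theorem traceSandwich_le_traceSandwich_zero_left (hN : N.IsSymm) (hA : ∀ i ∈ s, (A i).IsSymm)
    {p q : ℕ} (hpq : Even (p + q)) :
    traceSandwich N A s p q ≤ traceSandwich N A s 0 (p + q) := by
  obtain ⟨n, hn⟩ := hpq
  have key := le_apply_zero_of_sq_le_apply_two_mul_mul (n := n)
    (fun a ↦ traceSandwich N A s a (2 * n - a))
    (fun a ha ↦ by rw [traceSandwich_comm, Nat.sub_sub_self ha])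
    (fun a ha ↦ by
      convert traceSandwich_sq_le hN hA a (n - a) 0 n using 3 <;> omega)
    (by simpa using traceSandwich_two_mul_nonneg hN hA 0 n) (a := p) (by omega)
  convert key using 2 <;> omega

end Matrix

namespace SimpleGraph

variable {V β : Type} [Fintype V] (G : SimpleGraph V) [DecidableRel G.Adj] (c : Sym2 V → β)

noncomputable def normAdjMatrix : Matrix V V ℝ :=
  Matrix.of fun x y ↦ if G.Adj x y then (√(G.degree x))⁻¹ * (√(G.degree y))⁻¹ else 0

noncomputable def colourAdjMatrix (α : β) : Matrix V V ℝ :=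
  Matrix.of fun x y ↦ if c s(x, y) = α then G.normAdjMatrix x y else 0

theorem normAdjMatrix_isSymm : G.normAdjMatrix.IsSymm := by
  ext x y
  simp only [Matrix.transpose_apply, normAdjMatrix, Matrix.of_apply, G.adj_comm, mul_comm]

theorem colourAdjMatrix_isSymm (α : β) : (G.colourAdjMatrix c α).IsSymm := by
  ext x y
  simp only [Matrix.transpose_apply, colourAdjMatrix, Matrix.of_apply, Sym2.eq_swap,
    ← G.normAdjMatrix_isSymm.apply x y]

theorem prod_normAdjMatrix_cycle {m : ℕ} [NeZero m] (u : Fin m → V) :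
    ∏ i, G.normAdjMatrix (u i) (u (i + 1)) =
      if IsHomCycle G u then ∏ i, ((G.degree (u i) : ℝ))⁻¹ else 0 := by
  simp only [IsHomCycle, cyclicSucc_eq_add_one]
  split_ifs with hu
  · simp only [normAdjMatrix, Matrix.of_apply, if_pos (hu _)]
    rw [prod_mul_distrib, Fintype.prod_equiv (Equiv.addRight 1)
      (fun i ↦ (√(G.degree (u (i + 1)) : ℝ))⁻¹) (fun i ↦ (√(G.degree (u i) : ℝ))⁻¹)
      fun _ ↦ rfl, ← prod_mul_distrib]
    refine prod_congr rfl fun i _ ↦ ?_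
    rw [← mul_inv, Real.mul_self_sqrt (Nat.cast_nonneg _)]
  · push Not at hu
    obtain ⟨i, hi⟩ := hu
    exact prod_eq_zero (mem_univ i) (if_neg hi)

theorem prod_ite_colourAdjMatrix {m : ℕ} [NeZero m] (a b : Fin m) (α : β) (u : Fin m → V) :
    ∏ i, (if i = a ∨ i = b then G.colourAdjMatrix c α else G.normAdjMatrix) (u i) (u (i + 1)) =
      if c s(u a, u (a + 1)) = α ∧ c s(u b, u (b + 1)) = α then
        ∏ i, G.normAdjMatrix (u i) (u (i + 1))
      else 0 := by
  split_ifs with h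
  · refine prod_congr rfl fun i _ ↦ ?_
    split_ifs with hi
    · rcases hi with rfl | rfl
      · simp only [colourAdjMatrix, Matrix.of_apply, if_pos h.1]
      · simp only [colourAdjMatrix, Matrix.of_apply, if_pos h.2]
    · rfl
  · rcases not_and_or.mp h with h | h
    · exact prod_eq_zero (mem_univ a) (by simp [colourAdjMatrix, h])
    · exact prod_eq_zero (mem_univ b) (by simp [colourAdjMatrix, h])

theorem homCyclePairSum_eq_sum_trace {m : ℕ} [NeZero m] (a b : Fin m) :
    homCyclePairSum G c a b = ∑ α ∈ univ.image c,
      (List.ofFn fun i ↦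
        if i = a ∨ i = b then G.colourAdjMatrix c α else G.normAdjMatrix).prod.trace := by
  simp only [Matrix.trace_list_ofFn_prod, prod_ite_colourAdjMatrix, prod_normAdjMatrix_cycle]
  rw [sum_comm]
  refine sum_congr rfl fun u _ ↦ ?_
  simp only [cyclicSucc_eq_add_one]
  by_cases h : c s(u a, u (a + 1)) = c s(u b, u (b + 1))
  · rw [sum_eq_single_of_mem _ (mem_image_of_mem c (mem_univ _))
      fun α _ hα ↦ if_neg fun h' ↦ hα h'.1.symm]
    simp only [h, and_true, if_true]
  · rw [sum_eq_zero fun α _ ↦ if_neg fun h' ↦ h (h'.1.trans h'.2.symm),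
      if_neg fun h' ↦ h h'.2]

theorem homCyclePairSum_eq_traceSandwich {m : ℕ} {a b : Fin m} (hab : a < b) :
    homCyclePairSum G c a b =
      G.normAdjMatrix.traceSandwich (G.colourAdjMatrix c) (univ.image c) (m - 1 - b + a)
        (b - a - 1) := by
  have : NeZero m := NeZero.of_pos a.pos
  rw [homCyclePairSum_eq_sum_trace]
  refine sum_congr rfl fun α _ ↦ ?_
  set N := G.normAdjMatrix
  set A := G.colourAdjMatrix c α
  rw [List.prod_ofFn_ite_or_eq a b hab, Matrix.trace_mul_comm,
    show N ^ (m - 1 - b) * (N ^ (a : ℕ) * A * N ^ (b - a - 1 : ℕ) * A) =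
      N ^ (m - 1 - b + a) * A * N ^ (b - a - 1 : ℕ) * A by simp only [pow_add, Matrix.mul_assoc],
    Matrix.trace_mul_comm]
  simp only [Matrix.mul_assoc]

end SimpleGraph

theorem homCyclePairSum_isGreatest {V : Type} [Fintype V] (G : SimpleGraph V)
    [DecidableRel G.Adj] {β : Type} (c : Sym2 V → β)
    (k : ℕ) (hk : 0 < k) :
    IsGreatest
      {x : ℝ | ∃ (i j : ℕ) (_ : 1 ≤ i) (_ : i < j) (_ : j ≤ 2 * k),
        x = homCyclePairSum G c (m := 2 * k) ⟨i - 1, by omega⟩ ⟨j - 1, by omega⟩}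
      (homCyclePairSum G c (m := 2 * k) ⟨0, by omega⟩ ⟨2 * k - 1, by omega⟩) := by
  refine ⟨⟨1, 2 * k, le_rfl, by omega, le_rfl, rfl⟩, ?_⟩
  rintro x ⟨i, j, hi, hij, hjk, rfl⟩
  rw [G.homCyclePairSum_eq_traceSandwich c (Fin.mk_lt_mk.mpr (by omega)),
    G.homCyclePairSum_eq_traceSandwich c (Fin.mk_lt_mk.mpr (by omega))]
  have hle := Matrix.traceSandwich_le_traceSandwich_zero_left G.normAdjMatrix_isSymm
    (fun α _ ↦ G.colourAdjMatrix_isSymm c α) (s := univ.image c)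
    (p := 2 * k - 1 - (j - 1) + (i - 1)) (q := j - 1 - (i - 1) - 1) ⟨k - 1, by omega⟩
  refine hle.trans_eq (congrArg₂ _ ?_ ?_) <;> simp only <;> omega
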